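/- Let π be the stationary distribution π_i = ρ^i / ∑_{j=0}^{k} ρ^j on {0,...,k} with ρ > 0, and fix a waste threshold T with 0 ≤ T ≤ k. Then the expected surplus W(ρ) = ∑_{i=T+1}^{k} (i - T)·π_i is nonnegative, bounded above by k - T, and is strictly increasing in ρ when 0 < T < k. -/
import Mathlib


open Finset

private noncomputable def fw (T : ℕ) : ℕ → ℝ := fun i => if T < i then (i : ℝ) - T else 0

private lemma fw_nonneg (T i : ℕ) : 0 ≤ fw T i := by
  unfold fw
  split
  · have : (T : ℝ) < i := by exact_mod_cast ‹T < i›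
    linarith
  · exact le_refl 0

private lemma fw_mono (T : ℕ) : Monotone (fw T) := by
  intro i j hij
  unfold fw
  split
  · have h1 : T < j := lt_of_lt_of_le ‹T < i› hij
    simp only [h1, if_true]
    have : (i : ℝ) ≤ j := by exact_mod_cast hij
    linarith
  · split
    · have : (T : ℝ) < j := by exact_mod_cast ‹T < j›
      linarith
    · exact le_refl 0

private lemma cross_le {a b : ℝ} (ha : 0 ≤ a) (hb : 0 ≤ b) (hab : a ≤ b) {i j : ℕ}
    (hij : i ≤ j) : b ^ i * a ^ j ≤ a ^ i * b ^ j := by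
  obtain ⟨d, rfl⟩ := Nat.exists_eq_add_of_le hij
  rw [pow_add, pow_add]
  calc b ^ i * (a ^ i * a ^ d) = (a ^ i * b ^ i) * a ^ d := by ring
    _ ≤ (a ^ i * b ^ i) * b ^ d := by
        apply mul_le_mul_of_nonneg_left (pow_le_pow_left₀ ha hab d)
        positivity
    _ = a ^ i * (b ^ i * b ^ d) := by ring

private lemma term_nonneg (T : ℕ) {a b : ℝ} (ha : 0 ≤ a) (hb : 0 ≤ b) (hab : a ≤ b)
    (i j : ℕ) : 0 ≤ (fw T i - fw T j) * (b ^ i * a ^ j - a ^ i * b ^ j) := by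
  rcases le_total i j with hij | hij
  · have h1 : fw T i - fw T j ≤ 0 := sub_nonpos.mpr (fw_mono T hij)
    have h2 : b ^ i * a ^ j - a ^ i * b ^ j ≤ 0 := sub_nonpos.mpr (cross_le ha hb hab hij)
    nlinarith
  · have h1 : 0 ≤ fw T i - fw T j := sub_nonneg.mpr (fw_mono T hij)
    have h2 : 0 ≤ b ^ i * a ^ j - a ^ i * b ^ j := by
      have := cross_le ha hb hab hij
      nlinarith
    exact mul_nonneg h1 h2

private lemma key (k T : ℕ) (hTk : T < k) {a b : ℝ} (ha : 0 < a) (hab : a < b) :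
    (∑ i ∈ range (k + 1), fw T i * a ^ i) * (∑ j ∈ range (k + 1), b ^ j)
      < (∑ i ∈ range (k + 1), fw T i * b ^ i) * (∑ j ∈ range (k + 1), a ^ j) := by
  have hb : 0 < b := lt_trans ha hab
  rw [← sub_pos]
  have expand : (∑ i ∈ range (k + 1), fw T i * b ^ i) * (∑ j ∈ range (k + 1), a ^ j)
      - (∑ i ∈ range (k + 1), fw T i * a ^ i) * (∑ j ∈ range (k + 1), b ^ j)
      = ∑ i ∈ range (k + 1), ∑ j ∈ range (k + 1),
          fw T i * (b ^ i * a ^ j - a ^ i * b ^ j) := by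
    rw [Finset.sum_mul_sum, Finset.sum_mul_sum, ← Finset.sum_sub_distrib]
    refine Finset.sum_congr rfl fun i _ => ?_
    rw [← Finset.sum_sub_distrib]
    refine Finset.sum_congr rfl fun j _ => by ring
  rw [expand]
  have double : (∑ i ∈ range (k + 1), ∑ j ∈ range (k + 1),
          fw T i * (b ^ i * a ^ j - a ^ i * b ^ j)) * 2
      = ∑ i ∈ range (k + 1), ∑ j ∈ range (k + 1),
          (fw T i - fw T j) * (b ^ i * a ^ j - a ^ i * b ^ j) := by
    have hcomm : (∑ i ∈ range (k + 1), ∑ j ∈ range (k + 1),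
          fw T i * (b ^ i * a ^ j - a ^ i * b ^ j))
        = ∑ i ∈ range (k + 1), ∑ j ∈ range (k + 1),
          fw T j * (b ^ j * a ^ i - a ^ j * b ^ i) := Finset.sum_comm
    calc (∑ i ∈ range (k + 1), ∑ j ∈ range (k + 1),
          fw T i * (b ^ i * a ^ j - a ^ i * b ^ j)) * 2
        = (∑ i ∈ range (k + 1), ∑ j ∈ range (k + 1),
            fw T i * (b ^ i * a ^ j - a ^ i * b ^ j))
          + (∑ i ∈ range (k + 1), ∑ j ∈ range (k + 1),
            fw T j * (b ^ j * a ^ i - a ^ j * b ^ i)) := by rw [← hcomm]; ring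
      _ = ∑ i ∈ range (k + 1), ∑ j ∈ range (k + 1),
            (fw T i - fw T j) * (b ^ i * a ^ j - a ^ i * b ^ j) := by
          rw [← Finset.sum_add_distrib]
          refine Finset.sum_congr rfl fun i _ => ?_
          rw [← Finset.sum_add_distrib]
          refine Finset.sum_congr rfl fun j _ => by ring
  have hpos : 0 < ∑ i ∈ range (k + 1), ∑ j ∈ range (k + 1),
      (fw T i - fw T j) * (b ^ i * a ^ j - a ^ i * b ^ j) := by
    apply Finset.sum_pos'
    · intro i _
      exact Finset.sum_nonneg fun j _ => term_nonneg T ha.le hb.le hab.le i j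
    · refine ⟨k, Finset.mem_range.mpr (Nat.lt_succ_self k), ?_⟩
      apply Finset.sum_pos'
      · intro j _
        exact term_nonneg T ha.le hb.le hab.le k j
      · refine ⟨0, Finset.mem_range.mpr (Nat.succ_pos k), ?_⟩
        have hfk : fw T k = (k : ℝ) - T := by unfold fw; simp [hTk]
        have hf0 : fw T 0 = 0 := by
          unfold fw; simp
        rw [hfk, hf0, pow_zero, pow_zero, sub_zero, mul_one, mul_one]
        have h1 : 0 < (k : ℝ) - T := by
          have : (T : ℝ) < k := by exact_mod_cast hTk
          linarith
        have h2 : a ^ k < b ^ k := pow_lt_pow_left₀ hab ha.le (by omega)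
        nlinarith
  linarith

/-- Expected surplus above a threshold `T` under the stationary distribution
`π_i = ρ^i / ∑_j ρ^j` on `{0,...,k}`: it is nonnegative, bounded by `k - T`,
and strictly increasing in `ρ` when `0 < T < k`. -/
theorem expected_surplus (k T : ℕ) (hT : T ≤ k) :
    let W : ℝ → ℝ := fun ρ =>
      ∑ i ∈ Finset.Icc (T + 1) k,
        ((i : ℝ) - (T : ℝ)) * (ρ ^ i / ∑ j ∈ Finset.range (k + 1), ρ ^ j)
    (∀ ρ : ℝ, 0 < ρ → 0 ≤ W ρ ∧ W ρ ≤ (k : ℝ) - (T : ℝ)) ∧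
    (0 < T → T < k → StrictMonoOn W (Set.Ioi (0 : ℝ))) := by
  intro W
  have hS : ∀ ρ : ℝ, 0 < ρ → 0 < ∑ j ∈ range (k + 1), ρ ^ j := fun ρ hρ =>
    Finset.sum_pos (fun j _ => pow_pos hρ j) ⟨0, Finset.mem_range.mpr (Nat.succ_pos k)⟩
  have hsub : Finset.Icc (T + 1) k ⊆ Finset.range (k + 1) := by
    intro i hi
    rw [Finset.mem_range]
    exact Nat.lt_succ_of_le (Finset.mem_Icc.mp hi).2
  constructor
  · intro ρ hρ
    have hSρ := hS ρ hρ
    constructor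
    · apply Finset.sum_nonneg
      intro i hi
      have hi1 := (Finset.mem_Icc.mp hi).1
      have hTi : (T : ℝ) ≤ i := by exact_mod_cast le_trans (Nat.le_succ T) hi1
      exact mul_nonneg (by linarith) (div_nonneg (pow_pos hρ i).le hSρ.le)
    · have step1 : W ρ ≤ ∑ i ∈ Finset.Icc (T + 1) k,
          ((k : ℝ) - T) * (ρ ^ i / ∑ j ∈ range (k + 1), ρ ^ j) := by
        apply Finset.sum_le_sum
        intro i hi
        have hik := (Finset.mem_Icc.mp hi).2
        have : (i : ℝ) ≤ k := by exact_mod_cast hik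
        exact mul_le_mul_of_nonneg_right (by linarith)
          (div_nonneg (pow_pos hρ i).le hSρ.le)
      have hkT : (0 : ℝ) ≤ (k : ℝ) - T := by
        have : (T : ℝ) ≤ k := by exact_mod_cast hT
        linarith
      have step2 : ∑ i ∈ Finset.Icc (T + 1) k,
          (ρ ^ i / ∑ j ∈ range (k + 1), ρ ^ j) ≤ 1 := by
        calc ∑ i ∈ Finset.Icc (T + 1) k, (ρ ^ i / ∑ j ∈ range (k + 1), ρ ^ j)
            ≤ ∑ i ∈ range (k + 1), (ρ ^ i / ∑ j ∈ range (k + 1), ρ ^ j) :=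
              Finset.sum_le_sum_of_subset_of_nonneg hsub
                (fun i _ _ => div_nonneg (pow_pos hρ i).le hSρ.le)
          _ = 1 := by rw [← Finset.sum_div, div_self (ne_of_gt hSρ)]
      calc W ρ ≤ ∑ i ∈ Finset.Icc (T + 1) k,
            ((k : ℝ) - T) * (ρ ^ i / ∑ j ∈ range (k + 1), ρ ^ j) := step1
        _ = ((k : ℝ) - T) * ∑ i ∈ Finset.Icc (T + 1) k,
            (ρ ^ i / ∑ j ∈ range (k + 1), ρ ^ j) := by rw [Finset.mul_sum]
        _ ≤ ((k : ℝ) - T) * 1 := mul_le_mul_of_nonneg_left step2 hkT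
        _ = (k : ℝ) - T := mul_one _
  · intro hT0 hTk
    intro a ha b hb hab
    have ha' : (0 : ℝ) < a := ha
    have hb' : (0 : ℝ) < b := hb
    have hW : ∀ ρ : ℝ, W ρ = (∑ i ∈ range (k + 1), fw T i * ρ ^ i)
        / (∑ j ∈ range (k + 1), ρ ^ j) := by
      intro ρ
      have h1 : ∑ i ∈ range (k + 1), fw T i * ρ ^ i
          = ∑ i ∈ Finset.Icc (T + 1) k, fw T i * ρ ^ i := by
        symm
        apply Finset.sum_subset hsub
        intro i hi hni
        have : ¬ T < i := by
          rw [Finset.mem_Icc] at hni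
          rw [Finset.mem_range] at hi
          omega
        unfold fw
        simp [this]
      have h2 : ∑ i ∈ Finset.Icc (T + 1) k, fw T i * ρ ^ i
          = ∑ i ∈ Finset.Icc (T + 1) k, ((i : ℝ) - T) * ρ ^ i := by
        refine Finset.sum_congr rfl fun i hi => ?_
        have : T < i := by
          have := (Finset.mem_Icc.mp hi).1; omega
        unfold fw
        simp [this]
      rw [h1, h2]
      simp only [W]
      rw [Finset.sum_div]
      refine Finset.sum_congr rfl fun i _ => by ring
    rw [hW a, hW b, div_lt_div_iff₀ (hS a ha') (hS b hb')]
    exact key k T hTk ha' hab
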